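/- arXiv:math/0211437 — 4 statements merged into one kernel-verified Lean document; each statement's English description precedes it below -/
import Mathlib

section
/- Let H be the Hecke algebra of a Coxeter system with the standard quadratic relation (t_i+q^{-1})(t_i−q)=0 over Z[q,q^{-1}], and let the bar involution be the ring homomorphism with q̄ = q^{-1} and t̄_i = t_i^{-1}. Then for a finite parabolic subgroup W_f with longest element of length ν_f, the element ρ_f = Σ_{w∈W_f} q^{ℓ(w)} t_w satisfies ρ̄_f = q^{-2ν_f} ρ_f. -/
/-!
For `s ∈ J`, pairing `w` with `ws` and using the quadratic relation gives `ρ t_s = q ρ`, hence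
`ρ t_v = q^{ℓ(v)} ρ` for every `v ∈ W_f`. The longest element `w₀` satisfies
`ℓ(v) + ℓ(v⁻¹ w₀) = ℓ(w₀)` on `W_f`, so `t̄_w t_{w₀} = t_{w⁻¹}⁻¹ t_{w⁻¹} t_{w w₀} = t_{w w₀}`;
reindexing by `w ↦ w w₀` gives `ρ̄ t_{w₀} = q^{-ν} ρ = q^{-2ν} ρ t_{w₀}`, and `t_{w₀}` is
invertible.

The length identity for `w₀` rests on the exchange condition, which we derive from Tits'
reflection cocycle: `s_i ↦ (δ_{s_i}, s_i)` extends to a homomorphism from `W` into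
`(W → ℤ/2) ⋊ W`, and its first component `η(w)` is the indicator of the left inversions of `w`.
Reading `η` along a word shows that a left inversion can be deleted from any expression.
-/

open LaurentPolynomial

noncomputable section

abbrev HeckeBase := LaurentPolynomial ℤ

namespace SemidirectProduct

variable {N G : Type*} [Group G]

theorem pow_right [Group N] {φ : G →* MulAut N} (x : N ⋊[φ] G) (n : ℕ) :
    (x ^ n).right = x.right ^ n :=
  map_pow rightHom x n

theorem pow_left [CommGroup N] {φ : G →* MulAut N} (x : N ⋊[φ] G) (n : ℕ) :
    (x ^ n).left = ∏ k ∈ Finset.range n, φ (x.right ^ k) x.left := by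
  induction n with
  | zero => rfl
  | succ n ih => rw [pow_succ, mul_left, ih, pow_right, Finset.prod_range_succ]

end SemidirectProduct

theorem Finset.sum_range_two_mul {M : Type*} [AddCommMonoid M] (g : ℕ → M) (m : ℕ) :
    ∑ n ∈ range (2 * m), g n = ∑ k ∈ range m, (g (2 * k) + g (2 * k + 1)) := by
  induction m with
  | zero => simp
  | succ m ih => rw [mul_add, sum_range_succ, sum_range_succ, sum_range_succ, ih, add_assoc]

theorem inv_mul_mul_eq_iff_eq_mul_mul_inv {G : Type*} [Group G] (a t x : G) :
    a⁻¹ * t * a = x ↔ t = a * x * a⁻¹ := by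
  constructor <;> intro h
  · rw [← h]; group
  · rw [h]; group

namespace CoxeterSystem

variable {B W : Type*} [Group W] {M : CoxeterMatrix B} (cs : CoxeterSystem M W)

local prefix:100 "s" => cs.simple
local prefix:100 "π" => cs.wordProd
local prefix:100 "ℓ" => cs.length

variable (W) in
def conjArgAction : W →* MulAut (Multiplicative (W → ZMod 2)) where
  toFun u :=
    { toFun f := .ofAdd fun t => f.toAdd (u⁻¹ * t * u)
      invFun f := .ofAdd fun t => f.toAdd (u * t * u⁻¹)
      left_inv f := by ext t; simp [mul_assoc]
      right_inv f := by ext t; simp [mul_assoc]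
      map_mul' _ _ := rfl }
  map_one' := by ext; simp
  map_mul' _ _ := by ext; simp [mul_assoc]

theorem conjArgAction_apply (u : W) (f : Multiplicative (W → ZMod 2)) (t : W) :
    (conjArgAction W u f).toAdd t = f.toAdd (u⁻¹ * t * u) := rfl

open scoped Classical in
def reflGen (i : B) : Multiplicative (W → ZMod 2) ⋊[conjArgAction W] W :=
  ⟨.ofAdd (Pi.single (s i) 1), s i⟩

open scoped Classical in
theorem conjArgAction_pow_reflGen_mul_reflGen_left (i j : B) (k : ℕ) (t : W) :
    (conjArgAction W ((s i * s j) ^ k) (cs.reflGen i * cs.reflGen j).left).toAdd t =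
      (if t = s i * (s j * s i) ^ (2 * k) then 1 else 0) +
        (if t = s i * (s j * s i) ^ (2 * k + 1) then 1 else 0) := by
  have hconj : ((s i * s j) ^ k)⁻¹ = (s j * s i) ^ k := by
    rw [← inv_pow, mul_inv_rev, inv_simple, inv_simple]
  have hsemi : (s i * s j) ^ k * s i = s i * (s j * s i) ^ k :=
    (SemiconjBy.pow_right (show s i * (s j * s i) = s i * s j * s i by simp [mul_assoc]) k).eq.symm
  have h1 : ((s i * s j) ^ k)⁻¹ * t * (s i * s j) ^ k = s i ↔
      t = s i * (s j * s i) ^ (2 * k) := by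
    rw [inv_mul_mul_eq_iff_eq_mul_mul_inv, hsemi, hconj, mul_assoc, ← pow_add, two_mul]
  have h2 : (s i)⁻¹ * (((s i * s j) ^ k)⁻¹ * t * (s i * s j) ^ k) * s i = s j ↔
      t = s i * (s j * s i) ^ (2 * k + 1) := by
    rw [inv_mul_mul_eq_iff_eq_mul_mul_inv, inv_mul_mul_eq_iff_eq_mul_mul_inv, cs.inv_simple,
      hconj, show 2 * k + 1 = k + 1 + k by ring, pow_add, pow_succ]
    simp only [mul_assoc]
    rw [← mul_assoc ((s i * s j) ^ k), hsemi]
    simp only [mul_assoc]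
  simp only [SemidirectProduct.mul_left, map_mul, toAdd_mul, Pi.add_apply, conjArgAction_apply,
    reflGen, toAdd_ofAdd, Pi.single_apply, h1, h2]

theorem isLiftable_reflGen : M.IsLiftable cs.reflGen := by
  classical
  intro i j
  have hrm : (s j * s i) ^ M i j = 1 := by
    rw [← inv_inj, ← inv_pow, mul_inv_rev, inv_simple, inv_simple, cs.simple_mul_simple_pow,
      inv_one]
  refine SemidirectProduct.ext ?_
    ((SemidirectProduct.pow_right _ _).trans (cs.simple_mul_simple_pow i j))
  ext t
  -- the first component counts `t` among `s_i (s_j s_i)^n`, `n < 2m`, a list that is periodic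
  -- with period `m`, so every entry occurs an even number of times
  set g : ℕ → ZMod 2 := fun n => if t = s i * (s j * s i) ^ n then 1 else 0
  calc ((cs.reflGen i * cs.reflGen j) ^ M i j).left.toAdd t
      = ∑ n ∈ Finset.range (2 * M i j), g n := by
        rw [SemidirectProduct.pow_left, toAdd_prod, Finset.sum_apply, Finset.sum_range_two_mul]
        exact Finset.sum_congr rfl fun k _ => cs.conjArgAction_pow_reflGen_mul_reflGen_left i j k t
    _ = ∑ n ∈ Finset.range (M i j), g n + ∑ n ∈ Finset.range (M i j), g n := by
        rw [two_mul, Finset.sum_range_add]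
        simp [g, pow_add, hrm]
    _ = 0 := CharTwo.add_self_eq_zero _

def reflCocycle : W →* Multiplicative (W → ZMod 2) ⋊[conjArgAction W] W :=
  cs.lift ⟨cs.reflGen, cs.isLiftable_reflGen⟩

theorem reflCocycle_right (w : W) : (cs.reflCocycle w).right = w := by
  have : SemidirectProduct.rightHom.comp cs.reflCocycle = MonoidHom.id W :=
    cs.ext_simple fun i => by simp [reflCocycle, reflGen, SemidirectProduct.rightHom]
  exact DFunLike.congr_fun this w

def inversionIndicator (w t : W) : ZMod 2 := (cs.reflCocycle w).left.toAdd t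

theorem inversionIndicator_mul (a b t : W) :
    cs.inversionIndicator (a * b) t =
      cs.inversionIndicator a t + cs.inversionIndicator b (a⁻¹ * t * a) := by
  simp [inversionIndicator, conjArgAction_apply, reflCocycle_right]

theorem inversionIndicator_one (t : W) : cs.inversionIndicator 1 t = 0 := by
  simp [inversionIndicator]

open scoped Classical in
theorem inversionIndicator_simple (i : B) (t : W) :
    cs.inversionIndicator (s i) t = if t = s i then 1 else 0 := by
  simp [inversionIndicator, reflCocycle, reflGen, Pi.single_apply]

theorem exists_eraseIdx_eq_mul_wordProd {ω : List B} {t : W}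
    (h : cs.inversionIndicator (π ω) t = 1) :
    ∃ j < ω.length, π (ω.eraseIdx j) = t * π ω := by
  induction ω generalizing t with
  | nil => simp [inversionIndicator_one] at h
  | cons i ω ih =>
    by_cases hti : t = s i
    · exact ⟨0, by simp, by simp [hti, wordProd_cons]⟩
    · rw [wordProd_cons, inversionIndicator_mul, inversionIndicator_simple, if_neg hti, zero_add,
        inv_simple] at h
      obtain ⟨j, hj, hje⟩ := ih h
      refine ⟨j + 1, by simpa using hj, ?_⟩
      rw [List.eraseIdx_cons_succ, wordProd_cons, hje, wordProd_cons]
      simp only [← mul_assoc, simple_mul_simple_self, one_mul]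

theorem length_mul_lt_of_inversionIndicator_eq_one {w t : W}
    (h : cs.inversionIndicator w t = 1) : ℓ (t * w) < ℓ w := by
  obtain ⟨ω, hω, rfl⟩ := cs.exists_isReduced w
  obtain ⟨j, hj, hje⟩ := cs.exists_eraseIdx_eq_mul_wordProd h
  calc ℓ (t * π ω) = ℓ (π (ω.eraseIdx j)) := by rw [hje]
    _ ≤ (ω.eraseIdx j).length := cs.length_wordProd_le _
    _ < ω.length := by rw [List.length_eraseIdx_of_lt hj]; omega
    _ = ℓ (π ω) := hω.symm

theorem inversionIndicator_self {t : W} (ht : cs.IsReflection t) :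
    cs.inversionIndicator t t = 1 := by
  obtain ⟨u, i, rfl⟩ := ht
  have h0 := cs.inversionIndicator_mul u u⁻¹ (u * s i * u⁻¹)
  have h1 := cs.inversionIndicator_mul u (s i * u⁻¹) (u * s i * u⁻¹)
  have h2 := cs.inversionIndicator_mul (s i) u⁻¹ (s i)
  have hc : u⁻¹ * (u * s i * u⁻¹) * u = s i := by group
  rw [mul_inv_cancel, inversionIndicator_one, hc] at h0
  rw [hc, ← mul_assoc] at h1
  rw [inversionIndicator_simple, if_pos rfl, inv_simple, simple_mul_simple_cancel_right] at h2
  linear_combination h1 + h2 - h0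

theorem inversionIndicator_eq_one_iff {w t : W} (ht : cs.IsReflection t) :
    cs.inversionIndicator w t = 1 ↔ ℓ (t * w) < ℓ w := by
  refine ⟨cs.length_mul_lt_of_inversionIndicator_eq_one, fun hlt => ?_⟩
  rcases (by decide : ∀ x : ZMod 2, x = 0 ∨ x = 1) (cs.inversionIndicator w t) with h0 | h1
  · have h1 : cs.inversionIndicator (t * w) t = 1 := by
      rw [inversionIndicator_mul, inversionIndicator_self cs ht, ht.inv, ht.mul_self, one_mul, h0,
        add_zero]
    have := cs.length_mul_lt_of_inversionIndicator_eq_one h1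
    rw [← mul_assoc, ht.mul_self, one_mul] at this
    omega
  · exact h1

theorem length_mul_simple_mul {a b : W} {i : B} (hab : ℓ (a * b) = ℓ a + ℓ b)
    (ha : ℓ (a * s i) = ℓ a + 1) (hb : ℓ (s i * b) = ℓ b + 1) :
    ℓ (a * s i * b) = ℓ a + ℓ b + 1 := by
  -- `a s_i b = t (a b)` for the reflection `t = a s_i a⁻¹`, which is not a left inversion of `a b`
  set t := a * s i * a⁻¹
  have ht : cs.IsReflection t := ⟨a, i, rfl⟩
  have hnot : ¬ ℓ (t * (a * b)) < ℓ (a * b) := by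
    rw [← cs.inversionIndicator_eq_one_iff ht, inversionIndicator_mul]
    intro h
    obtain ha' | hb' := (by decide : ∀ x y : ZMod 2, x + y = 1 → x = 1 ∨ y = 1) _ _ h
    · have := cs.length_mul_lt_of_inversionIndicator_eq_one ha'
      rw [show t * a = a * s i by simp [t]] at this
      omega
    · rw [show a⁻¹ * t * a = s i by simp [t, mul_assoc]] at hb'
      have := cs.length_mul_lt_of_inversionIndicator_eq_one hb'
      omega
  have hne := ht.length_mul_right_ne (a * b)
  have hle := cs.length_mul_le (a * s i) b
  rw [show a * s i * b = t * (a * b) by simp [t, mul_assoc]] at hle ⊢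
  omega

theorem exists_sublist_isReduced (ω : List B) :
    ∃ α : List B, α.Sublist ω ∧ cs.IsReduced α ∧ π α = π ω := by
  induction ω with
  | nil => exact ⟨[], .slnil, by simp [IsReduced], rfl⟩
  | cons i ω ih =>
    obtain ⟨α, hsub, hred, hprod⟩ := ih
    rcases cs.length_simple_mul (π α) i with h | h
    · refine ⟨i :: α, hsub.cons_cons i, ?_, by rw [wordProd_cons, wordProd_cons, hprod]⟩
      rw [IsReduced, wordProd_cons, h, hred.eq, List.length_cons]
    · have hind : cs.inversionIndicator (π α) (s i) = 1 :=
        (cs.inversionIndicator_eq_one_iff (cs.isReflection_simple i)).mpr (by omega)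
      obtain ⟨j, hj, hje⟩ := cs.exists_eraseIdx_eq_mul_wordProd hind
      refine ⟨α.eraseIdx j, (List.eraseIdx_sublist α j).trans (hsub.cons i), ?_,
        by rw [hje, hprod, wordProd_cons]⟩
      rw [IsReduced, hje, List.length_eraseIdx_of_lt hj, ← hred.eq]
      omega

variable {J : Set B}

theorem wordProd_mem_closure {ω : List B} (hω : ∀ i ∈ ω, i ∈ J) :
    π ω ∈ Subgroup.closure (cs.simple '' J) :=
  list_prod_mem <| by
    simpa using fun i hi => Subgroup.subset_closure (Set.mem_image_of_mem cs.simple (hω i hi))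

theorem exists_word_of_mem_closure {w : W} (hw : w ∈ Subgroup.closure (cs.simple '' J)) :
    ∃ ω : List B, (∀ i ∈ ω, i ∈ J) ∧ π ω = w := by
  induction hw using Subgroup.closure_induction with
  | mem x hx =>
    obtain ⟨i, hi, rfl⟩ := hx
    exact ⟨[i], by simpa using hi, cs.wordProd_singleton i⟩
  | one => exact ⟨[], by simp, cs.wordProd_nil⟩
  | mul x y _ _ ihx ihy =>
    obtain ⟨ω₁, h₁, rfl⟩ := ihx
    obtain ⟨ω₂, h₂, rfl⟩ := ihy
    exact ⟨ω₁ ++ ω₂, fun i hi => (List.mem_append.mp hi).elim (h₁ i) (h₂ i),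
      cs.wordProd_append ω₁ ω₂⟩
  | inv x _ ih =>
    obtain ⟨ω, h, rfl⟩ := ih
    exact ⟨ω.reverse, by simpa using h, cs.wordProd_reverse ω⟩

theorem exists_isReduced_of_mem_closure {w : W} (hw : w ∈ Subgroup.closure (cs.simple '' J)) :
    ∃ ω : List B, (∀ i ∈ ω, i ∈ J) ∧ cs.IsReduced ω ∧ π ω = w := by
  obtain ⟨ω, hJ, rfl⟩ := cs.exists_word_of_mem_closure hw
  obtain ⟨α, hsub, hred, hprod⟩ := cs.exists_sublist_isReduced ω
  exact ⟨α, fun i hi => hJ i (hsub.subset hi), hred, hprod⟩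

theorem closure_simple_induction_right {P : W → Prop} (one : P 1)
    (mul_simple : ∀ v ∈ Subgroup.closure (cs.simple '' J), ∀ i ∈ J,
      ℓ (v * s i) = ℓ v + 1 → P v → P (v * s i))
    {w : W} (hw : w ∈ Subgroup.closure (cs.simple '' J)) : P w := by
  obtain ⟨ω, hJ, hred, rfl⟩ := cs.exists_isReduced_of_mem_closure hw
  clear hw
  induction ω using List.reverseRecOn with
  | nil => simpa using one
  | append_singleton α i ih =>
    have hαJ : ∀ j ∈ α, j ∈ J := fun j hj => hJ j (by simp [hj])
    have hα := cs.length_wordProd_le α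
    have hle := cs.length_mul_le (π α) (s i)
    rw [IsReduced, wordProd_append, wordProd_singleton, List.length_append,
      List.length_singleton] at hred
    rw [wordProd_append, wordProd_singleton, length_simple] at *
    exact mul_simple _ (cs.wordProd_mem_closure hαJ) i (hJ i (by simp)) (by omega)
      (ih hαJ (by rw [IsReduced]; omega))

theorem length_add_length_inv_mul_of_forall_length_le {m : W}
    (hm : m ∈ Subgroup.closure (cs.simple '' J))
    (hmax : ∀ w ∈ Subgroup.closure (cs.simple '' J), ℓ w ≤ ℓ m)
    {v : W} (hv : v ∈ Subgroup.closure (cs.simple '' J)) : ℓ v + ℓ (v⁻¹ * m) = ℓ m := by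
  refine cs.closure_simple_induction_right (P := fun v => ℓ v + ℓ (v⁻¹ * m) = ℓ m)
    (by simp) (fun v hv i hi hvi ih => ?_) hv
  rw [mul_inv_rev, inv_simple, mul_assoc]
  rcases cs.length_simple_mul (v⁻¹ * m) i with h | h
  · have hab : ℓ (v * (v⁻¹ * m)) = ℓ v + ℓ (v⁻¹ * m) := by rw [mul_inv_cancel_left, ih]
    have hlong := cs.length_mul_simple_mul hab hvi h
    have hmem : v * s i * (v⁻¹ * m) ∈ Subgroup.closure (cs.simple '' J) :=
      mul_mem (mul_mem hv (Subgroup.subset_closure ⟨i, hi, rfl⟩)) (mul_mem (inv_mem hv) hm)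
    have := hmax _ hmem
    omega
  · omega

theorem mul_eq_of_length_inv_add_length_mul {H : Type*} [Monoid H] (t : W → H)
    (hlen : ∀ v w : W, ℓ (v * w) = ℓ v + ℓ w → t v * t w = t (v * w))
    {w m : W} {x : H} (hx : x * t w⁻¹ = 1) (h : ℓ w⁻¹ + ℓ (w * m) = ℓ m) :
    x * t m = t (w * m) :=
  calc x * t m = x * (t w⁻¹ * t (w * m)) := by
        rw [hlen _ _ (by rw [inv_mul_cancel_left, h]), inv_mul_cancel_left]
    _ = t (w * m) := by rw [← mul_assoc, hx, one_mul]

section Hecke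

variable {H : Type*} [Ring H] [Algebra HeckeBase H]

local notation "𝐓" => (T : ℤ → HeckeBase)

theorem mul_self_eq_of_quadratic {x : H}
    (h : (x + algebraMap HeckeBase H (T (-1))) * (x - algebraMap HeckeBase H (T 1)) = 0) :
    x * x = 1 + (𝐓 1 - 𝐓 (-1)) • x := by
  have hinv : algebraMap HeckeBase H (T (-1)) * algebraMap HeckeBase H (T 1) = 1 := by
    rw [← map_mul, ← T_add]; simp
  rw [add_mul, mul_sub, mul_sub, hinv, ← Algebra.commutes (T 1) x] at h
  rw [sub_smul, Algebra.smul_def, Algebra.smul_def, ← sub_eq_zero, ← h]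
  noncomm_ring

variable (t : W → H)

theorem add_mul_simple_of_length_mul_simple
    (hlen : ∀ v w : W, ℓ (v * w) = ℓ v + ℓ w → t v * t w = t (v * w)) {i : B}
    (hquad : (t (s i) + algebraMap HeckeBase H (T (-1))) *
      (t (s i) - algebraMap HeckeBase H (T 1)) = 0)
    {w : W} (hw : ℓ (w * s i) = ℓ w + 1) :
    (𝐓 (ℓ w) • t w + 𝐓 (ℓ (w * s i)) • t (w * s i)) * t (s i) =
      𝐓 1 • (𝐓 (ℓ w) • t w + 𝐓 (ℓ (w * s i)) • t (w * s i)) := by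
  have hws : t w * t (s i) = t (w * s i) := hlen _ _ (by rw [length_simple, hw])
  have hwss : t (w * s i) * t (s i) = t w + (𝐓 1 - 𝐓 (-1)) • t (w * s i) := by
    rw [← hws, mul_assoc, mul_self_eq_of_quadratic hquad, mul_add, mul_one, Algebra.mul_smul_comm]
  have hT : 𝐓 1 * 𝐓 (-1) = 1 := by rw [← T_add]; simp
  rw [add_mul, smul_mul_assoc, smul_mul_assoc, hws, hwss, hw, Nat.cast_add, Nat.cast_one,
    T_add, mul_comm (T _)]
  linear_combination (norm := module) (-𝐓 (ℓ w) * hT) • t (w * s i)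

variable (J) in
def parabolicSum [Fintype (Subgroup.closure (cs.simple '' J))] : H :=
  ∑ w : Subgroup.closure (cs.simple '' J), 𝐓 (ℓ w) • t w

variable [Fintype (Subgroup.closure (cs.simple '' J))]

theorem parabolicSum_mul_simple
    (hlen : ∀ v w : W, ℓ (v * w) = ℓ v + ℓ w → t v * t w = t (v * w)) {i : B}
    (hquad : (t (s i) + algebraMap HeckeBase H (T (-1))) *
      (t (s i) - algebraMap HeckeBase H (T 1)) = 0)
    (hi : i ∈ J) :
    cs.parabolicSum J t * t (s i) = 𝐓 1 • cs.parabolicSum J t := by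
  have hpair (w : W) : (𝐓 (ℓ w) • t w + 𝐓 (ℓ (w * s i)) • t (w * s i)) * t (s i) =
      𝐓 1 • (𝐓 (ℓ w) • t w + 𝐓 (ℓ (w * s i)) • t (w * s i)) := by
    rcases cs.length_mul_simple w i with h | h
    · exact add_mul_simple_of_length_mul_simple cs t hlen hquad h
    · have := add_mul_simple_of_length_mul_simple cs t hlen hquad (w := w * s i)
        (by rw [simple_mul_simple_cancel_right]; omega)
      rwa [simple_mul_simple_cancel_right, add_comm] at this
  set si : Subgroup.closure (cs.simple '' J) := ⟨s i, Subgroup.subset_closure ⟨i, hi, rfl⟩⟩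
  rw [parabolicSum, ← sub_eq_zero, Finset.sum_mul, Finset.smul_sum, ← Finset.sum_sub_distrib]
  refine Finset.sum_ninvolution (· * si) (fun w => ?_) (fun w _ => ?_)
    (fun _ => Finset.mem_univ _) (fun w => Subtype.ext (cs.simple_mul_simple_cancel_right i))
  · rw [sub_add_sub_comm, ← add_mul, ← smul_add, sub_eq_zero]
    exact hpair w
  · rw [Ne, mul_eq_left]
    intro h
    simpa [si] using congrArg (fun x : Subgroup.closure (cs.simple '' J) => ℓ x) h

theorem parabolicSum_mul_of_mem (ht1 : t 1 = 1)
    (hlen : ∀ v w : W, ℓ (v * w) = ℓ v + ℓ w → t v * t w = t (v * w))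
    (hquad : ∀ i : B, (t (s i) + algebraMap HeckeBase H (T (-1))) *
      (t (s i) - algebraMap HeckeBase H (T 1)) = 0)
    {v : W} (hv : v ∈ Subgroup.closure (cs.simple '' J)) :
    cs.parabolicSum J t * t v = 𝐓 (ℓ v) • cs.parabolicSum J t := by
  refine cs.closure_simple_induction_right
    (P := fun v => cs.parabolicSum J t * t v = 𝐓 (ℓ v) • cs.parabolicSum J t)
    (by simp [ht1]) (fun v _ i hi hvi ih => ?_) hv
  rw [← hlen v (s i) (by rw [length_simple, hvi]), ← mul_assoc, ih, smul_mul_assoc,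
    parabolicSum_mul_simple cs t hlen (hquad i) hi, smul_smul, ← T_add, hvi, Nat.cast_succ]

theorem bar_parabolicSum_mul_of_forall_length_le
    (hlen : ∀ v w : W, ℓ (v * w) = ℓ v + ℓ w → t v * t w = t (v * w))
    (bar : H →+* H)
    (hbarq : ∀ n : ℤ, bar (algebraMap HeckeBase H (T n)) = algebraMap HeckeBase H (T (-n)))
    (hbart : ∀ w : W, bar (t w) * t w⁻¹ = 1)
    {m : W} (hm : m ∈ Subgroup.closure (cs.simple '' J))
    (hmax : ∀ w ∈ Subgroup.closure (cs.simple '' J), ℓ w ≤ ℓ m) :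
    bar (cs.parabolicSum J t) * t m = 𝐓 (-ℓ m) • cs.parabolicSum J t := by
  have hcompl (w : Subgroup.closure (cs.simple '' J)) : ℓ (w : W)⁻¹ + ℓ (w * m) = ℓ m := by
    simpa using cs.length_add_length_inv_mul_of_forall_length_le hm hmax (inv_mem w.2)
  rw [parabolicSum, map_sum, Finset.sum_mul, Finset.smul_sum]
  refine Fintype.sum_equiv (Equiv.mulRight ⟨m, hm⟩) _ _ (fun w => ?_)
  rw [Algebra.smul_def, map_mul, hbarq, ← Algebra.smul_def, smul_mul_assoc,
    mul_eq_of_length_inv_add_length_mul cs t hlen (hbart w) (hcompl w), smul_smul, ← T_add]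
  have := hcompl w
  rw [length_inv] at this
  simp only [Equiv.coe_mulRight, Subgroup.coe_mul]
  congr 2
  omega

end Hecke

end CoxeterSystem

theorem stmt1 {B W H : Type*} [Group W] [Ring H] [Algebra HeckeBase H]
    {M : CoxeterMatrix B} (cs : CoxeterSystem M W)
    (t : W → H)
    (ht1 : t 1 = 1)
    (hlen : ∀ v w : W, cs.length (v * w) = cs.length v + cs.length w →
      t v * t w = t (v * w))
    (hquad : ∀ i : B, (t (cs.simple i) + algebraMap HeckeBase H (T (-1))) *
      (t (cs.simple i) - algebraMap HeckeBase H (T 1)) = 0)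
    -- the bar involution: a ring homomorphism with `q̄ = q⁻¹` and `t̄_w = (t_{w⁻¹})⁻¹`
    (bar : H →+* H)
    (hbarq : ∀ n : ℤ, bar (algebraMap HeckeBase H (T n)) = algebraMap HeckeBase H (T (-n)))
    (hbart : ∀ w : W, bar (t w) * t w⁻¹ = 1 ∧ t w⁻¹ * bar (t w) = 1)
    -- `W_f`: a finite parabolic subgroup generated by simple reflections indexed by `J`
    (J : Set B) (Wf : Subgroup W)
    (hWf : Wf = Subgroup.closure (cs.simple '' J))
    [Fintype Wf]
    -- the longest element `w₀` of `W_f`, with `ν_f = ℓ(w₀)`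
    (w₀ : W) (hw₀ : w₀ ∈ Wf) (hmax : ∀ w ∈ Wf, cs.length w ≤ cs.length w₀) :
    bar (∑ w : Wf, algebraMap HeckeBase H (T (cs.length (w : W))) * t (w : W)) =
      algebraMap HeckeBase H (T (-(2 * (cs.length w₀ : ℤ)))) *
        (∑ w : Wf, algebraMap HeckeBase H (T (cs.length (w : W))) * t (w : W)) := by
  subst hWf
  simp only [← Algebra.smul_def]
  change bar (cs.parabolicSum J t) = T _ • cs.parabolicSum J t
  have hunit : t w₀ * bar (t w₀⁻¹) = 1 := by simpa using (hbart w₀⁻¹).2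
  refine isRightRegular_of_mul_eq_one hunit (?_ : _ * _ = _ * _)
  rw [cs.bar_parabolicSum_mul_of_forall_length_le t hlen bar hbarq (fun w => (hbart w).1) hw₀
      hmax,
    smul_mul_assoc, cs.parabolicSum_mul_of_mem t ht1 hlen hquad hw₀, smul_smul, ← T_add]
  congr 2
  ring

end
end

section
/- Fix p ≥ 1 and d ≥ 1, and let A_d be the set of Z×Z matrices s = (s_{ij}) with entries in N satisfying s_{i+p,j+p} = s_{ij} for all i,j and Σ_{i∈Z} Σ_{j=1}^p s_{ij} = d. For compositions f = (f_1,...,f_p) and f' = (f'_1,...,f'_p) of d, let A_{f,f'} = {s ∈ A_d : Σ_{j∈Z} s_{ij} = f_i and Σ_{i∈Z} s_{ij} = f'_j for i,j ∈ {1,...,p}}. Let A_d^{ap} = {s ∈ A_d : for every j ∈ Z \ {0} there exists i ∈ Z with s_{i,i+j} = 0}. Suppose p > d and f is small (all f_i ∈ {0,1}). Then A_{f,f'} ⊆ A_d^{ap}. -/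
/-!
Statement 6: Fix `p > d ≥ 1`. Let `s` be a `p`-periodic ℕ-valued ℤ×ℤ matrix whose
rows are "small" (each row contains at most one nonzero entry, which equals 1, so
the row sums `f_i ∈ {0,1}`) and such that `Σ_{i=1}^p f_i = d` (i.e. exactly `d` of
the rows `i ∈ {1,…,p}` are nonzero; this is the condition `s ∈ A_{f,f'}` with `f`
small, for the appropriate column-sum vector `f'`). Then `s` is aperiodic:
for every `j ∈ ℤ \ {0}` there exists `i` with `s_{i,i+j} = 0`.
-/

theorem stmt6 (d p : ℕ) (hd : 1 ≤ d) (hpd : d < p)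
    (s : ℤ → ℤ → ℕ)
    (hper : ∀ i j : ℤ, s (i + p) (j + p) = s i j)
    -- each row has at most one nonzero entry, equal to 1 (row sums are small)
    (hsmall : ∀ i j j' : ℤ, s i j ≠ 0 → s i j' ≠ 0 → j = j' ∧ s i j = 1)
    -- total weight per period is `d`: exactly `d` of the rows `1,…,p` are nonzero
    (hcard : {i : ℤ | 1 ≤ i ∧ i ≤ (p : ℤ) ∧ ∃ j : ℤ, s i j ≠ 0}.ncard = d) :
    ∀ r : ℤ, r ≠ 0 → ∃ i : ℤ, s i (i + r) = 0 := by
  intro r _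
  by_contra h
  push_neg at h
  have hset : {i : ℤ | 1 ≤ i ∧ i ≤ (p : ℤ) ∧ ∃ j : ℤ, s i j ≠ 0} = Set.Icc 1 (p : ℤ) := by
    ext i
    simp only [Set.mem_setOf_eq, Set.mem_Icc]
    exact ⟨fun ⟨h1, h2, _⟩ => ⟨h1, h2⟩, fun ⟨h1, h2⟩ => ⟨h1, h2, ⟨i + r, h i⟩⟩⟩
  rw [hset] at hcard
  have : (Set.Icc (1 : ℤ) (p : ℤ)).ncard = p := by
    rw [← Finset.coe_Icc, Set.ncard_coe_finset, Int.card_Icc]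
    simp
  omega
end

section
/- Let H be the affine Hecke algebra of GL_d over Z[q,q^{-1}] with generators t_1,...,t_{d-1}, x_1^{±1},...,x_d^{±1}. Let V^{⊗d} have basis {u_γ : γ ∈ Z^d} (u_γ = u_{m_1}⊗...⊗u_{m_d} appropriately twisted by z-powers). Define a right action by: u_γ ⋄ t_i = q·u_γ if γ·s_i = γ; u_γ ⋄ t_i = u_{γ·s_i} if γ·s_i < γ; u_γ ⋄ t_i = u_{γ·s_i} + (q−q^{-1})u_γ if γ·s_i > γ (for γ in a fundamental domain, extended suitably); and u_ν ⋄ x_κ = u_{ν·τ_κ}. Then the braid relations t_i t_{i+1} t_i = t_{i+1} t_i t_{i+1} and the quadratic relations (t_i + q^{-1})(t_i − q) = 0 hold on V^{⊗d}. -/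
/-!
Statement 9: The right action of the (affine) Hecke algebra of `GL_d` on `V^{⊗d}`.
`V^{⊗d}` is the free `ℤ[q,q⁻¹]`-module with basis `{u_γ : γ ∈ ℤ^d}`. The operator
of `t_i` acts on the basis by: `u_γ ⋄ t_i = q u_γ` if `γ_i = γ_{i+1}`;
`u_γ ⋄ t_i = u_{γ·s_i}` if `γ_i > γ_{i+1}` (i.e. `γ·s_i < γ`); and
`u_γ ⋄ t_i = u_{γ·s_i} + (q − q⁻¹) u_γ` if `γ_i < γ_{i+1}`, where `γ·s_i = γ ∘ sᵢ`
swaps the `i`-th and `(i+1)`-st coordinates. Then the quadratic relations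
`(t_i + q⁻¹)(t_i − q) = 0` and the braid relations
`t_i t_{i+1} t_i = t_{i+1} t_i t_{i+1}` hold on `V^{⊗d}`.
-/

open LaurentPolynomial

noncomputable section

abbrev QA := LaurentPolynomial ℤ

/-- `V^{⊗d}`: free module on basis `u_γ`, `γ ∈ ℤ^d`. -/
abbrev Tensor (d : ℕ) := (Fin d → ℤ) →₀ QA

/-- The operator of `t_i` (coordinates `i, j` with `j = i+1`). -/
def Ti (d : ℕ) (i j : Fin d) : Tensor d →ₗ[QA] Tensor d :=
  Finsupp.lsum QA fun γ =>
    if γ i = γ j then (T 1 : QA) • Finsupp.lsingle γ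
    else if γ j < γ i then Finsupp.lsingle (γ ∘ Equiv.swap i j)
    else Finsupp.lsingle (γ ∘ Equiv.swap i j) +
      (T 1 - T (-1) : QA) • Finsupp.lsingle γ

lemma Ti_single_eq {d : ℕ} {i j : Fin d} {γ : Fin d → ℤ} (h : γ i = γ j) :
    Ti d i j (Finsupp.single γ 1) = (T 1 : QA) • Finsupp.single γ 1 := by
  rw [Ti, Finsupp.lsum_single, if_pos h]
  simp

lemma Ti_single_gt {d : ℕ} {i j : Fin d} {γ : Fin d → ℤ} (h : γ j < γ i) :
    Ti d i j (Finsupp.single γ 1) = Finsupp.single (γ ∘ Equiv.swap i j) 1 := by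
  rw [Ti, Finsupp.lsum_single, if_neg h.ne', if_pos h]
  simp

lemma Ti_single_lt {d : ℕ} {i j : Fin d} {γ : Fin d → ℤ} (h : γ i < γ j) :
    Ti d i j (Finsupp.single γ 1) = Finsupp.single (γ ∘ Equiv.swap i j) 1 +
      (T 1 - T (-1) : QA) • Finsupp.single γ 1 := by
  rw [Ti, Finsupp.lsum_single, if_neg h.ne, if_neg (asymm h)]
  simp

lemma swap_swap_comp {d : ℕ} (f : Fin d → ℤ) (i j : Fin d) :
    (f ∘ ⇑(Equiv.swap i j)) ∘ ⇑(Equiv.swap i j) = f := by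
  funext x
  simp [Equiv.swap_apply_self]

lemma long_word {d : ℕ} {i j k : Fin d} (hij : i ≠ j) (hjk : j ≠ k) (hik : i ≠ k)
    (γ : Fin d → ℤ) :
    ((γ ∘ ⇑(Equiv.swap j k)) ∘ ⇑(Equiv.swap i j)) ∘ ⇑(Equiv.swap j k) =
    ((γ ∘ ⇑(Equiv.swap i j)) ∘ ⇑(Equiv.swap j k)) ∘ ⇑(Equiv.swap i j) := by
  funext x
  simp only [Function.comp_apply]
  congr 1
  simp only [Equiv.swap_apply_def]
  split_ifs <;> simp_all

lemma quad {d : ℕ} (i j : Fin d) :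
    (Ti d i j + (T (-1) : QA) • LinearMap.id) ∘ₗ
      (Ti d i j - (T 1 : QA) • LinearMap.id) = 0 := by
  have hqu : (T 1 : QA) * T (-1) = 1 := by
    rw [← T_add]; norm_num
  apply Finsupp.lhom_ext'
  intro γ
  apply LinearMap.ext_ring
  simp only [LinearMap.comp_apply, Finsupp.lsingle_apply, LinearMap.add_apply,
    LinearMap.sub_apply, LinearMap.smul_apply, LinearMap.id_apply,
    LinearMap.zero_apply, LinearMap.zero_comp, map_sub, map_smul]
  rcases lt_trichotomy (γ i) (γ j) with h | h | h
  · have h1 : (γ ∘ ⇑(Equiv.swap i j)) j < (γ ∘ ⇑(Equiv.swap i j)) i := by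
      simpa using h
    simp only [Ti_single_lt h, Ti_single_gt h1, map_add, map_smul,
      swap_swap_comp, smul_add, smul_smul, smul_sub]
    match_scalars <;> first | ring1 | linear_combination hqu | linear_combination -hqu
  · simp only [Ti_single_eq h, map_smul, smul_smul]
    match_scalars
    ring
  · have h1 : (γ ∘ ⇑(Equiv.swap i j)) i < (γ ∘ ⇑(Equiv.swap i j)) j := by
      simpa using h
    simp only [Ti_single_gt (show γ j < γ i from h), Ti_single_lt h1, map_add,
      map_smul, swap_swap_comp, smul_add, smul_smul, smul_sub]
    match_scalars <;> first | ring1 | linear_combination hqu | linear_combination -hqu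

set_option maxHeartbeats 2000000 in
lemma braid {d : ℕ} (i j k : Fin d) (hij : i ≠ j) (hjk : j ≠ k) (hik : i ≠ k) :
    Ti d i j ∘ₗ Ti d j k ∘ₗ Ti d i j = Ti d j k ∘ₗ Ti d i j ∘ₗ Ti d j k := by
  have hqu : (T 1 : QA) * T (-1) = 1 := by
    rw [← T_add]; norm_num
  have hji := hij.symm
  have hkj := hjk.symm
  have hki := hik.symm
  apply Finsupp.lhom_ext'
  intro γ
  apply LinearMap.ext_ring
  simp only [LinearMap.comp_apply, Finsupp.lsingle_apply]
  rcases lt_trichotomy (γ i) (γ j) with h1 | h1 | h1 <;>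
  rcases lt_trichotomy (γ j) (γ k) with h2 | h2 | h2 <;>
  rcases lt_trichotomy (γ i) (γ k) with h3 | h3 | h3 <;>
  first
  | omega
  | (simp only [Ti_single_eq, Ti_single_gt, Ti_single_lt, h1, h2, h3,
      Function.comp_apply, Equiv.swap_apply_left, Equiv.swap_apply_right,
      Equiv.swap_apply_of_ne_of_ne, swap_swap_comp, long_word hij hjk hik,
      map_add, map_smul, smul_add, smul_smul, smul_sub, hij, hjk, hik,
      hji, hkj, hki, ne_eq, not_false_eq_true, lt_irrefl, not_true, not_lt] <;>
    (match_scalars <;>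
       first
       | ring1
       | linear_combination hqu
       | linear_combination -hqu
       | linear_combination (T 1 - T (-1) : QA) * hqu
       | linear_combination (-(T 1 - T (-1)) : QA) * hqu
       | linear_combination (T 1 : QA) * hqu
       | linear_combination (T (-1) : QA) * hqu
       | linear_combination ((T 1 : QA) * (T 1 - T (-1))) * hqu
       | linear_combination (-(T 1 : QA) * (T 1 - T (-1))) * hqu))

theorem stmt9 (d : ℕ) (i : ℕ) (h1 : i + 1 < d) :
    -- quadratic relation `(t_i + q⁻¹)(t_i − q) = 0`
    ((Ti d ⟨i, by omega⟩ ⟨i + 1, h1⟩ + (T (-1) : QA) • LinearMap.id) ∘ₗ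
      (Ti d ⟨i, by omega⟩ ⟨i + 1, h1⟩ - (T 1 : QA) • LinearMap.id) = 0) ∧
    -- braid relation `t_i t_{i+1} t_i = t_{i+1} t_i t_{i+1}`
    (∀ h2 : i + 2 < d,
      Ti d ⟨i, by omega⟩ ⟨i + 1, h1⟩ ∘ₗ Ti d ⟨i + 1, h1⟩ ⟨i + 2, h2⟩ ∘ₗ
        Ti d ⟨i, by omega⟩ ⟨i + 1, h1⟩ =
      Ti d ⟨i + 1, h1⟩ ⟨i + 2, h2⟩ ∘ₗ Ti d ⟨i, by omega⟩ ⟨i + 1, h1⟩ ∘ₗ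
        Ti d ⟨i + 1, h1⟩ ⟨i + 2, h2⟩) := by
  refine ⟨quad _ _, fun h2 => braid _ _ _ ?_ ?_ ?_⟩ <;>
    simp [Fin.ext_iff] <;> omega

end
end

section
/- With the right H-action on V^{⊗d} above, for μ ∈ Z^d weakly decreasing with entries in {1,...,p}, and w a minimal-length representative of W_e·w (where W_e is the stabilizer of μ in the symmetric group S_d), one has u_μ ⋄ t_w = u_{μ·w}. -/
/-!
Length in `S_d` equals the number of inversions, so along a reduced word of `w` every prefix `v`
is followed by a letter `s_i` with `v(i) < v(i+1)`. If `μ` took the same value at `v(i)` and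
`v(i+1)`, the transposition `v s_i v⁻¹` would lie in `W_e` and shorten `w`, against minimality.
As `μ` is decreasing, `(μ·v)_i > (μ·v)_{i+1}`, and `t_i` acts on `u_{μ·v}` by the bare place
permutation `u_{μ·v} ↦ u_{μ·v s_i}`.
-/

open LaurentPolynomial

noncomputable section

/-- The adjacent transposition `s_i = (i, i+1)`. -/
def swapA (d : ℕ) (i : {i : ℕ // i + 1 < d}) : Equiv.Perm (Fin d) :=
  Equiv.swap ⟨i.1, by omega⟩ ⟨i.1 + 1, i.2⟩

/-- Product of a word in the adjacent transpositions. -/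
def wordProd (d : ℕ) (L : List {i : ℕ // i + 1 < d}) : Equiv.Perm (Fin d) :=
  (L.map (swapA d)).prod

/-- Coxeter length on `S_d`: minimal length of a word in adjacent transpositions. -/
noncomputable def len (d : ℕ) (w : Equiv.Perm (Fin d)) : ℕ :=
  sInf {k | ∃ L : List {i : ℕ // i + 1 < d}, wordProd d L = w ∧ L.length = k}

/-- The operator of `t_{s_i}`. -/
def TiOp (d : ℕ) (i : {i : ℕ // i + 1 < d}) : Tensor d →ₗ[QA] Tensor d :=
  Ti d ⟨i.1, by omega⟩ ⟨i.1 + 1, i.2⟩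

open Equiv Finset

section AdjacentTranspositions

variable {d : ℕ}

def idxA (a : {i : ℕ // i + 1 < d}) : Fin d := ⟨a.1, by omega⟩

def idxB (a : {i : ℕ // i + 1 < d}) : Fin d := ⟨a.1 + 1, a.2⟩

lemma swapA_eq_swap (a : {i : ℕ // i + 1 < d}) : swapA d a = swap (idxA a) (idxB a) := rfl

lemma idxA_lt_idxB (a : {i : ℕ // i + 1 < d}) : idxA a < idxB a := Nat.lt_succ_self _

@[simp] lemma swapA_symm (a : {i : ℕ // i + 1 < d}) : (swapA d a).symm = swapA d a :=
  symm_swap _ _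

lemma swapA_mul_self (a : {i : ℕ // i + 1 < d}) : swapA d a * swapA d a = 1 :=
  swap_mul_self _ _

lemma swapA_lt_swapA_iff (a : {i : ℕ // i + 1 < d}) {x y : Fin d}
    (h₁ : (x, y) ≠ (idxA a, idxB a)) (h₂ : (x, y) ≠ (idxB a, idxA a)) :
    swapA d a x < swapA d a y ↔ x < y := by
  simp only [swapA_eq_swap, swap_apply_def, ne_eq, Prod.mk.injEq, not_and, Fin.lt_def,
    Fin.ext_iff, idxA, idxB] at *
  split_ifs <;> simp only at * <;> omega

@[simp] lemma wordProd_nil : wordProd d [] = 1 := rfl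

@[simp] lemma wordProd_cons (a : {i : ℕ // i + 1 < d}) (L : List {i : ℕ // i + 1 < d}) :
    wordProd d (a :: L) = swapA d a * wordProd d L := by
  simp [wordProd]

lemma wordProd_concat (L : List {i : ℕ // i + 1 < d}) (a : {i : ℕ // i + 1 < d}) :
    wordProd d (L ++ [a]) = wordProd d L * swapA d a := by
  simp [wordProd]

end AdjacentTranspositions

section Inversions

variable {d : ℕ}

def invSet (v : Perm (Fin d)) : Finset (Fin d × Fin d) :=
  {p | p.1 < p.2 ∧ v p.2 < v p.1}

def invCount (v : Perm (Fin d)) : ℕ := #(invSet v)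

lemma mem_invSet {v : Perm (Fin d)} {p : Fin d × Fin d} :
    p ∈ invSet v ↔ p.1 < p.2 ∧ v p.2 < v p.1 := by
  simp [invSet]

@[simp] lemma invCount_one : invCount (1 : Perm (Fin d)) = 0 := by
  simp only [invCount, card_eq_zero, eq_empty_iff_forall_notMem, mem_invSet]
  exact fun p h => h.1.asymm h.2

lemma eq_one_of_strictMono {v : Perm (Fin d)} (hv : StrictMono v) : v = 1 :=
  DFunLike.coe_injective <| (hv.range_inj strictMono_id).1 (by simp)

lemma eq_one_of_invCount_eq_zero {v : Perm (Fin d)} (h : invCount v = 0) : v = 1 := by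
  refine eq_one_of_strictMono fun x y hxy => ?_
  have : (x, y) ∉ invSet v := by simp_all [invCount]
  rw [mem_invSet, not_and, not_lt] at this
  exact (this hxy).lt_of_ne (v.injective.ne hxy.ne)

lemma invSet_mul_swapA_of_lt {v : Perm (Fin d)} {a : {i : ℕ // i + 1 < d}}
    (h : v (idxA a) < v (idxB a)) :
    invSet (v * swapA d a) =
      insert (idxA a, idxB a) ((invSet v).map ((swapA d a).prodCongr (swapA d a)).toEmbedding) := by
  ext ⟨x, y⟩
  rw [mem_insert, mem_map_equiv, mem_invSet, mem_invSet]
  simp only [prodCongr_symm, prodCongr_apply, swapA_symm, Prod.map_fst, Prod.map_snd,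
    Perm.mul_apply]
  by_cases hij : (x, y) = (idxA a, idxB a)
  · simp_all [swapA_eq_swap, idxA_lt_idxB a]
  by_cases hji : (x, y) = (idxB a, idxA a)
  · simp_all [swapA_eq_swap, (idxA_lt_idxB a).not_gt, h.not_gt]
  rw [swapA_lt_swapA_iff a hij hji]
  simp [hij]

lemma invCount_mul_swapA_of_lt {v : Perm (Fin d)} {a : {i : ℕ // i + 1 < d}}
    (h : v (idxA a) < v (idxB a)) : invCount (v * swapA d a) = invCount v + 1 := by
  rw [invCount, invSet_mul_swapA_of_lt h, card_insert_of_notMem, card_map, invCount]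
  simp [mem_invSet, swapA_eq_swap, (idxA_lt_idxB a).not_gt]

lemma invCount_mul_swapA_of_gt {v : Perm (Fin d)} {a : {i : ℕ // i + 1 < d}}
    (h : v (idxB a) < v (idxA a)) : invCount (v * swapA d a) + 1 = invCount v := by
  have := invCount_mul_swapA_of_lt (v := v * swapA d a) (a := a)
    (by simpa [swapA_eq_swap] using h)
  rwa [mul_assoc, swapA_mul_self, mul_one, eq_comm] at this

lemma invCount_mul_swapA_le (v : Perm (Fin d)) (a : {i : ℕ // i + 1 < d}) :
    invCount (v * swapA d a) ≤ invCount v + 1 := by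
  rcases lt_or_gt_of_ne (v.injective.ne (idxA_lt_idxB a).ne) with h | h
  · exact (invCount_mul_swapA_of_lt h).le
  · have := invCount_mul_swapA_of_gt h
    omega

lemma invCount_mul_wordProd_le (v : Perm (Fin d)) (L : List {i : ℕ // i + 1 < d}) :
    invCount (v * wordProd d L) ≤ invCount v + L.length := by
  induction L generalizing v with
  | nil => simp
  | cons a L ih =>
    rw [wordProd_cons, ← mul_assoc, List.length_cons]
    have := invCount_mul_swapA_le v a
    have := ih (v * swapA d a)
    omega

lemma exists_descent {v : Perm (Fin d)} (hv : v ≠ 1) :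
    ∃ a : {i : ℕ // i + 1 < d}, v (idxB a) < v (idxA a) := by
  contrapose! hv
  refine eq_one_of_strictMono ?_
  obtain _ | m := d
  · exact fun x => x.elim0
  refine Fin.strictMono_iff_lt_succ.2 fun i => ?_
  exact (hv ⟨i, by omega⟩).lt_of_ne (v.injective.ne Fin.castSucc_lt_succ.ne)

lemma exists_wordProd_eq_length_eq_invCount (v : Perm (Fin d)) :
    ∃ L : List {i : ℕ // i + 1 < d}, wordProd d L = v ∧ L.length = invCount v := by
  induction h : invCount v generalizing v with
  | zero => exact ⟨[], by rw [wordProd_nil, eq_one_of_invCount_eq_zero h], rfl⟩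
  | succ n ih =>
    obtain ⟨a, ha⟩ := exists_descent (v := v) (by rintro rfl; simp at h)
    obtain ⟨L, hL, hlen⟩ := ih (v * swapA d a) (by have := invCount_mul_swapA_of_gt ha; omega)
    refine ⟨L ++ [a], ?_, by simp [hlen]⟩
    rw [wordProd_concat, hL, mul_assoc, swapA_mul_self, mul_one]

end Inversions

lemma len_eq_invCount {d : ℕ} (v : Perm (Fin d)) : len d v = invCount v := by
  obtain ⟨L, hL, hlen⟩ := exists_wordProd_eq_length_eq_invCount v
  refine le_antisymm (hlen ▸ Nat.sInf_le ⟨L, hL, rfl⟩) ?_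
  obtain ⟨L', hL', hlen'⟩ : ∃ L', wordProd d L' = v ∧ L'.length = len d v :=
    Nat.sInf_mem (s := {k | ∃ L, wordProd d L = v ∧ L.length = k}) ⟨_, L, hL, rfl⟩
  simpa [hL', hlen'] using invCount_mul_wordProd_le 1 L'

lemma comp_swap_eq_self {α β : Type*} [DecidableEq α] {γ : α → β} {x y : α} (h : γ x = γ y) :
    γ ∘ swap x y = γ := by
  funext z
  simp only [Function.comp_apply, swap_apply_def]
  split_ifs <;> simp_all

section HeckeAction

variable {d : ℕ}

lemma TiOp_single_of_lt {γ : Fin d → ℤ} {a : {i : ℕ // i + 1 < d}}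
    (h : γ (idxB a) < γ (idxA a)) :
    TiOp d a (Finsupp.single γ 1) = Finsupp.single (γ ∘ swapA d a) 1 := by
  simp only [TiOp, Ti, Finsupp.lsum_single, idxA, idxB] at h ⊢
  rw [if_neg h.ne', if_pos h]
  rfl

theorem foldl_TiOp_single_comp {μ : Fin d → ℤ} (hμ : Antitone μ) {w : Perm (Fin d)}
    (hmin : ∀ u : Perm (Fin d), μ ∘ u = μ → invCount w ≤ invCount (u * w))
    (L : List {i : ℕ // i + 1 < d}) (v : Perm (Fin d)) (hw : v * wordProd d L = w)
    (hlen : invCount w = invCount v + L.length) :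
    L.foldl (fun x i => TiOp d i x) (Finsupp.single (μ ∘ v) 1) = Finsupp.single (μ ∘ w) 1 := by
  induction L generalizing v with
  | nil => simp_all
  | cons a L ih =>
    rw [wordProd_cons, ← mul_assoc] at hw
    rw [List.length_cons] at hlen
    have hascent : v (idxA a) < v (idxB a) := by
      refine (not_lt.1 fun h => ?_).lt_of_ne (v.injective.ne (idxA_lt_idxB a).ne)
      have := invCount_mul_swapA_of_gt h
      have := hw ▸ invCount_mul_wordProd_le (v * swapA d a) L
      omega
    have hdesc : μ (v (idxB a)) < μ (v (idxA a)) := by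
      refine (hμ hascent.le).lt_of_ne fun heq => ?_
      have hshorter : swap (v (idxA a)) (v (idxB a)) * w = v * wordProd d L := by
        rw [← hw, ← mul_assoc, ← mul_assoc, ← mul_swap_eq_swap_mul, ← swapA_eq_swap, mul_assoc v,
          swapA_mul_self, mul_one]
      have hle := hmin _ (comp_swap_eq_self heq.symm)
      rw [hshorter] at hle
      have := invCount_mul_wordProd_le v L
      omega
    rw [List.foldl_cons, TiOp_single_of_lt hdesc]
    exact ih _ hw (by rw [invCount_mul_swapA_of_lt hascent]; omega)

end HeckeAction

theorem stmt10_general (d : ℕ) (μ : Fin d → ℤ)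
    -- `μ` weakly decreasing with entries in `{1,…,p}`
    (hmono : ∀ i j : Fin d, i ≤ j → μ j ≤ μ i)
    (w : Equiv.Perm (Fin d)) (L : List {i : ℕ // i + 1 < d})
    -- `L` is a reduced expression for `w`
    (hL : wordProd d L = w) (hred : L.length = len d w)
    -- `w` has minimal length in its coset `W_e w`, `W_e = Stab(μ)`
    (hmin : ∀ u : Equiv.Perm (Fin d), μ ∘ u = μ → len d w ≤ len d (u * w)) :
    L.foldl (fun v i => TiOp d i v) (Finsupp.single μ (1 : QA)) =
      Finsupp.single (μ ∘ w) (1 : QA) := by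
  simp only [len_eq_invCount] at hred hmin
  simpa using foldl_TiOp_single_comp (fun i j => hmono i j) hmin L 1 (by rw [one_mul, hL])
    (by rw [invCount_one, zero_add, hred])

theorem stmt10 (d p : ℕ) (μ : Fin d → ℤ)
    -- `μ` weakly decreasing with entries in `{1,…,p}`
    (hmono : ∀ i j : Fin d, i ≤ j → μ j ≤ μ i)
    (hrange : ∀ i, 1 ≤ μ i ∧ μ i ≤ (p : ℤ))
    (w : Equiv.Perm (Fin d)) (L : List {i : ℕ // i + 1 < d})
    -- `L` is a reduced expression for `w`
    (hL : wordProd d L = w) (hred : L.length = len d w)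
    -- `w` has minimal length in its coset `W_e w`, `W_e = Stab(μ)`
    (hmin : ∀ u : Equiv.Perm (Fin d), μ ∘ u = μ → len d w ≤ len d (u * w)) :
    L.foldl (fun v i => TiOp d i v) (Finsupp.single μ (1 : QA)) =
      Finsupp.single (μ ∘ w) (1 : QA) :=
  stmt10_general d μ hmono w L hL hred hmin

end
end
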